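/- Let M be positive definite symmetric, H a matrix with HᵀM + MH ≤ −2λM for λ > 0, and consider e(t) solving ė = He + r(t) where r : ℝ → ℝⁿ is continuous. If at time t the value V(e) = √(eᵀMe) satisfies ‖√M r(t)‖ ≤ λ V(e(t)), then the upper right Dini derivative of V(e(t)) is ≤ 0. -/

import Mathlib

open Matrix Filter

/-- Upper right Dini derivative of a real function. -/
noncomputable def diniUpper (f : ℝ → ℝ) (t : ℝ) : ℝ :=
  limsup (fun h => (f (t + h) - f t) / h) (nhdsWithin 0 (Set.Ioi 0))

lemma tendsto_shift' (t : ℝ) : Tendsto (fun h : ℝ => t + h) (nhdsWithin 0 (Set.Ioi 0))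
    (nhdsWithin t {t}ᶜ) := by
  apply tendsto_nhdsWithin_of_tendsto_nhds_of_eventually_within
  · have : Tendsto (fun h : ℝ => t + h) (nhds 0) (nhds (t + 0)) :=
      (continuous_const.add continuous_id).tendsto 0
    simpa using this.mono_left nhdsWithin_le_nhds
  · filter_upwards [self_mem_nhdsWithin] with h (hh : 0 < h)
    simp [hh.ne']

lemma diniUpper_of_hasDerivAt' {f : ℝ → ℝ} {f' t : ℝ} (hf : HasDerivAt f f' t) :
    diniUpper f t = f' := by
  have h1 : Tendsto (fun h => (f (t + h) - f t) / h) (nhdsWithin 0 (Set.Ioi 0)) (nhds f') := by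
    have := (hasDerivAt_iff_tendsto_slope.1 hf).comp (tendsto_shift' t)
    refine this.congr (fun h => ?_)
    simp [slope, Function.comp, div_eq_inv_mul]
  exact h1.limsup_eq

lemma hasDerivAt_quadForm {n : ℕ} (M : Matrix (Fin n) (Fin n) ℝ) (e : ℝ → Fin n → ℝ)
    (v : Fin n → ℝ) (t : ℝ) (hde : HasDerivAt e v t) :
    HasDerivAt (fun s => e s ⬝ᵥ M *ᵥ e s) (v ⬝ᵥ M *ᵥ e t + e t ⬝ᵥ M *ᵥ v) t := by
  have h1 : ∀ i, HasDerivAt (fun s => e s i) (v i) t := hasDerivAt_pi.1 hde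
  have h2 : HasDerivAt (fun s => ∑ i, e s i * ∑ j, M i j * e s j)
      (∑ i, (v i * ∑ j, M i j * e t j + e t i * ∑ j, M i j * v j)) t := by
    apply HasDerivAt.fun_sum
    intro i _
    exact (h1 i).mul (HasDerivAt.fun_sum fun j _ => (h1 j).const_mul (M i j))
  have he : (fun s => e s ⬝ᵥ M *ᵥ e s) = (fun s => ∑ i, e s i * ∑ j, M i j * e s j) := by
    funext s; simp [dotProduct, mulVec]
  have hd : v ⬝ᵥ M *ᵥ e t + e t ⬝ᵥ M *ᵥ v
      = ∑ i, (v i * ∑ j, M i j * e t j + e t i * ∑ j, M i j * v j) := by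
    simp [dotProduct, mulVec, Finset.sum_add_distrib]
  rw [he, hd]; exact h2

theorem stmt3 {n : ℕ} (M H S : Matrix (Fin n) (Fin n) ℝ) (lam : ℝ) (hlam : 0 < lam)
    (hM : M.PosDef) (hS : S.PosSemidef) (hSsq : S * S = M)
    (hLyap : ((-2 * lam) • M - (Hᵀ * M + M * H)).PosSemidef)
    (e : ℝ → Fin n → ℝ) (r : ℝ → Fin n → ℝ) (hr : Continuous r)
    (hdyn : ∀ s, HasDerivAt e (H *ᵥ e s + r s) s)
    (t : ℝ)
    (hsmall : Real.sqrt ((S *ᵥ r t) ⬝ᵥ (S *ᵥ r t)) ≤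
      lam * Real.sqrt (e t ⬝ᵥ M *ᵥ e t)) :
    diniUpper (fun s => Real.sqrt (e s ⬝ᵥ M *ᵥ e s)) t ≤ 0 := by
  have hSt : Sᵀ = S := by
    have := hS.1
    rwa [Matrix.IsHermitian, conjTranspose_eq_transpose_of_trivial] at this
  -- commuting S across dot products
  have hScomm : ∀ x y : Fin n → ℝ, (S *ᵥ x) ⬝ᵥ y = x ⬝ᵥ (S *ᵥ y) := by
    intro x y
    have h1 : S *ᵥ x = x ᵥ* S := by rw [← hSt, mulVec_transpose, hSt]
    rw [h1, ← dotProduct_mulVec]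
  have key : ∀ x y : Fin n → ℝ, (S *ᵥ x) ⬝ᵥ (S *ᵥ y) = x ⬝ᵥ (M *ᵥ y) := by
    intro x y
    rw [hScomm, mulVec_mulVec, hSsq]
  -- notation
  set x := e t with hxdef
  set p := r t with hpdef
  set Q : ℝ → ℝ := fun s => e s ⬝ᵥ M *ᵥ e s with hQdef
  have hQnonneg : ∀ s, 0 ≤ Q s := by
    intro s
    have h0 : Q s = (S *ᵥ e s) ⬝ᵥ (S *ᵥ e s) := (key (e s) (e s)).symm
    rw [h0]
    exact Finset.sum_nonneg fun i _ => mul_self_nonneg _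
  -- derivative of Q at t
  set v : Fin n → ℝ := H *ᵥ x + p with hvdef
  have hQd : HasDerivAt Q (v ⬝ᵥ M *ᵥ x + x ⬝ᵥ M *ᵥ v) t :=
    hasDerivAt_quadForm M e v t (hdyn t)
  set D : ℝ := v ⬝ᵥ M *ᵥ x + x ⬝ᵥ M *ᵥ v with hDdef
  -- the derivative is nonpositive
  have hMsymm : ∀ a b : Fin n → ℝ, a ⬝ᵥ (M *ᵥ b) = b ⬝ᵥ (M *ᵥ a) := by
    intro a b
    rw [← key, ← key, dotProduct_comm]
  have hLy : (H *ᵥ x) ⬝ᵥ (M *ᵥ x) + x ⬝ᵥ (M *ᵥ (H *ᵥ x)) ≤ -2 * lam * Q t := by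
    have h0 := hLyap.dotProduct_mulVec_nonneg x
    simp only [star_trivial, sub_mulVec, add_mulVec, dotProduct_sub, dotProduct_add,
      smul_mulVec, dotProduct_smul, smul_eq_mul] at h0
    have h1 : x ⬝ᵥ ((Hᵀ * M) *ᵥ x) = (H *ᵥ x) ⬝ᵥ (M *ᵥ x) := by
      rw [← mulVec_mulVec, dotProduct_mulVec x Hᵀ, vecMul_transpose]
    have h2 : x ⬝ᵥ ((M * H) *ᵥ x) = x ⬝ᵥ (M *ᵥ (H *ᵥ x)) := by
      rw [← mulVec_mulVec]
    rw [h1, h2] at h0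
    simp only [hQdef]
    linarith
  have hCS : ((S *ᵥ x) ⬝ᵥ (S *ᵥ p)) ^ 2 ≤ ((S *ᵥ x) ⬝ᵥ (S *ᵥ x)) * ((S *ᵥ p) ⬝ᵥ (S *ᵥ p)) := by
    have := Finset.sum_mul_sq_le_sq_mul_sq Finset.univ (S *ᵥ x) (S *ᵥ p)
    simpa [dotProduct, sq] using this
  have hww : (S *ᵥ p) ⬝ᵥ (S *ᵥ p) ≤ lam ^ 2 * Q t := by
    have h1 : 0 ≤ (S *ᵥ p) ⬝ᵥ (S *ᵥ p) := by
      exact Finset.sum_nonneg fun i _ => mul_self_nonneg _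
    have h2 := Real.sq_sqrt h1
    have h3 := Real.sq_sqrt (hQnonneg t)
    have h4 := Real.sqrt_nonneg ((S *ᵥ p) ⬝ᵥ (S *ᵥ p))
    have h5 := Real.sqrt_nonneg (Q t)
    nlinarith [hsmall]
  have huw : x ⬝ᵥ (M *ᵥ p) ≤ lam * Q t := by
    have h1 : (x ⬝ᵥ (M *ᵥ p)) ^ 2 ≤ (lam * Q t) ^ 2 := by
      rw [← key]
      calc ((S *ᵥ x) ⬝ᵥ (S *ᵥ p)) ^ 2
          ≤ ((S *ᵥ x) ⬝ᵥ (S *ᵥ x)) * ((S *ᵥ p) ⬝ᵥ (S *ᵥ p)) := hCS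
        _ ≤ Q t * (lam ^ 2 * Q t) := by
            rw [key]
            exact mul_le_mul_of_nonneg_left hww (hQnonneg t)
        _ = (lam * Q t) ^ 2 := by ring
    have h2 : 0 ≤ lam * Q t := mul_nonneg hlam.le (hQnonneg t)
    nlinarith
  have hD : D ≤ 0 := by
    have h1 : D = (H *ᵥ x) ⬝ᵥ (M *ᵥ x) + x ⬝ᵥ (M *ᵥ (H *ᵥ x)) + 2 * (x ⬝ᵥ (M *ᵥ p)) := by
      simp only [hDdef, hvdef, add_dotProduct, mulVec_add, dotProduct_add]
      rw [hMsymm p x]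
      ring
    rw [h1]
    linarith [hLy, huw]
  -- case split on Q t
  rcases eq_or_lt_of_le (hQnonneg t) with hQ0 | hQpos
  · -- Q t = 0 : e t = 0 and r t = 0
    have hx0 : x = 0 := by
      by_contra hx
      exact absurd hQ0.symm (ne_of_gt (by simpa using hM.dotProduct_mulVec_pos hx))
    have hp0 : p = 0 := by
      have h1 : Real.sqrt ((S *ᵥ p) ⬝ᵥ (S *ᵥ p)) ≤ 0 := by
        have : Real.sqrt (Q t) = 0 := by rw [← hQ0, Real.sqrt_zero]
        calc Real.sqrt ((S *ᵥ p) ⬝ᵥ (S *ᵥ p)) ≤ lam * Real.sqrt (Q t) := hsmall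
          _ = 0 := by rw [this, mul_zero]
      have h2 : (S *ᵥ p) ⬝ᵥ (S *ᵥ p) = 0 := by
        have h3 : 0 ≤ (S *ᵥ p) ⬝ᵥ (S *ᵥ p) := Finset.sum_nonneg fun i _ => mul_self_nonneg _
        have := Real.sqrt_eq_zero h3 |>.1 (le_antisymm h1 (Real.sqrt_nonneg _))
        exact this
      have h4 : p ⬝ᵥ (M *ᵥ p) = 0 := by rw [← key]; exact h2
      by_contra hp
      exact absurd h4 (ne_of_gt (by simpa using hM.dotProduct_mulVec_pos hp))
    -- derivative of e at t is 0
    have hde0 : HasDerivAt e 0 t := by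
      have := hdyn t
      rw [← hxdef, ← hpdef, hx0, hp0] at this
      simpa using this
    have hslope : Tendsto (fun h => slope e t (t + h)) (nhdsWithin 0 (Set.Ioi 0)) (nhds 0) :=
      (hasDerivAt_iff_tendsto_slope.1 hde0).comp (tendsto_shift' t)
    have hc1 : ∀ i, Continuous (fun y : Fin n → ℝ => ∑ j, S i j * y j) :=
      fun i => continuous_finset_sum _ fun j _ => continuous_const.mul (continuous_apply j)
    have hφ : Continuous (fun y : Fin n → ℝ => (S *ᵥ y) ⬝ᵥ (S *ᵥ y)) := by
      simp only [mulVec, dotProduct]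
      exact continuous_finset_sum _ fun i _ => (hc1 i).mul (hc1 i)
    have hg : Tendsto (fun h => Real.sqrt ((S *ᵥ slope e t (t + h)) ⬝ᵥ (S *ᵥ slope e t (t + h))))
        (nhdsWithin 0 (Set.Ioi 0)) (nhds 0) := by
      have h1 : Tendsto (fun h => (S *ᵥ slope e t (t + h)) ⬝ᵥ (S *ᵥ slope e t (t + h)))
          (nhdsWithin 0 (Set.Ioi 0)) (nhds 0) := by
        have := (hφ.tendsto 0).comp hslope
        simpa [Function.comp_def] using this
      have := (Real.continuous_sqrt.tendsto 0).comp h1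
      simpa [Function.comp_def] using this
    have heq : (fun h => ((fun s => Real.sqrt (Q s)) (t + h) - (fun s => Real.sqrt (Q s)) t) / h)
        =ᶠ[nhdsWithin 0 (Set.Ioi 0)]
        (fun h => Real.sqrt ((S *ᵥ slope e t (t + h)) ⬝ᵥ (S *ᵥ slope e t (t + h)))) := by
      filter_upwards [self_mem_nhdsWithin] with h (hh : 0 < h)
      have hQt : Real.sqrt (Q t) = 0 := by rw [← hQ0, Real.sqrt_zero]
      have hsl : slope e t (t + h) = h⁻¹ • e (t + h) := by
        rw [slope_def_module]
        rw [← hxdef, hx0]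
        simp
      rw [hsl, mulVec_smul, smul_dotProduct, dotProduct_smul, smul_eq_mul, smul_eq_mul,
        ← mul_assoc, Real.sqrt_mul (by positivity), Real.sqrt_mul_self (by positivity : (0:ℝ) ≤ h⁻¹)]
      rw [key, hQt]
      simp only [hQdef]
      rw [sub_zero, div_eq_inv_mul]
    have := (hg.congr' heq.symm).limsup_eq
    simp only [diniUpper]
    rw [this]
  · -- Q t > 0
    have hQne : Q t ≠ 0 := ne_of_gt hQpos
    have hsq : HasDerivAt (fun s => Real.sqrt (Q s)) (1 / (2 * Real.sqrt (Q t)) * D) t :=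
      (Real.hasDerivAt_sqrt hQne).comp t hQd
    have h1 : diniUpper (fun s => Real.sqrt (Q s)) t = 1 / (2 * Real.sqrt (Q t)) * D :=
      diniUpper_of_hasDerivAt' hsq
    simp only [hQdef] at h1 ⊢
    rw [h1]
    have h2 : 0 < Real.sqrt (Q t) := Real.sqrt_pos.2 hQpos
    have h3 : 0 ≤ 1 / (2 * Real.sqrt (Q t)) := by positivity
    exact mul_nonpos_of_nonneg_of_nonpos h3 hD
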